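/- Let S be the unique noncommutative power series with zero constant term satisfying S = b − a·exp⧢(2S)·c, and set S_a := a·exp⧢(2S), S_b := S, S_c := exp⧢(2S)·c. Let σ : ℝ⟨⟨A⟩⟩ → ℝ⟨⟨A⟩⟩ be the linear map reversing each word (⟨σP, a₁⋯a_n⟩ = ⟨P, a_n⋯a₁⟩), and let φ : ℝ⟨⟨A⟩⟩ → ℝ⟨⟨A⟩⟩ be the linear map induced by applying the letter substitution a ↦ c, b ↦ b, c ↦ a to each letter of each word. Then σφ(S_b) = S_b, σφ(S_a) = S_c and σφ(S_c) = S_a, where σφ denotes the composition of σ and φ. -/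
import Mathlib


/-! STATEMENT 2: the symmetry σφ of the series S_a, S_b, S_c. -/

/-! STATEMENT 0: Existence and uniqueness of the noncommutative power series
`S = b − a·exp⧢(2S)·c` with zero constant term. -/

/-- The three-letter alphabet `A = {a, b, c}`. -/
inductive Letter : Type
  | a | b | c
deriving DecidableEq

/-- Words on the alphabet. -/
abbrev Word := List Letter

/-- Noncommutative power series over `ℝ` on the alphabet: a real coefficient
for every word. -/
abbrev Series := Word → ℝ

/-- The series associated to a single word (coefficient `1` on that word, `0` elsewhere). -/
def ofWord (v : Word) : Series := fun w => if w = v then 1 else 0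

/-- Concatenation product of series: `⟨PQ, w⟩ = Σ_{uv = w} ⟨P,u⟩⟨Q,v⟩`. -/
noncomputable def cmul (P Q : Series) : Series :=
  fun w => ∑ i ∈ Finset.range (w.length + 1), P (w.take i) * Q (w.drop i)

/-- The subword of `w` selected by a boolean mask. -/
def select (w : Word) (m : List Bool) : Word :=
  ((w.zip m).filter (fun p => p.2)).map Prod.fst

/-- The (bilinear) shuffle product of two series: the coefficient on `w` is the sum,
over all splittings of the positions of `w` into two complementary subsets, of the
product of the coefficients of the two selected subwords.  This is the bilinear
product determined on words by `ε⧢w = w⧢ε = w` and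
`(w₁a₁)⧢(w₂a₂) = (w₁⧢(w₂a₂))a₁ + ((w₁a₁)⧢w₂)a₂`. -/
noncomputable def shuffle (P Q : Series) : Series := fun w =>
  ∑ m : Fin w.length → Bool,
    P (select w (List.ofFn m)) * Q (select w (List.ofFn (fun i => ! m i)))

/-- Shuffle powers `P^{⧢k}`. -/
noncomputable def shufPow (P : Series) : ℕ → Series
  | 0 => ofWord []
  | k + 1 => shuffle (shufPow P k) P

/-- The shuffle exponential `exp⧢(P) = ε + Σ_{k≥1} P^{⧢k}/k!` (for `P` with zero
constant term only finitely many terms contribute to each coefficient). -/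
noncomputable def shufExp (P : Series) : Series :=
  fun w => ∑' k : ℕ, ((k.factorial : ℝ))⁻¹ * shufPow P k w

/-- The linear map reversing each word: `⟨σP, a₁⋯aₙ⟩ = ⟨P, aₙ⋯a₁⟩`. -/
def sigmaRev (P : Series) : Series := fun w => P w.reverse

/-- The letter substitution `a ↦ c, b ↦ b, c ↦ a`. -/
def flipLetter : Letter → Letter
  | Letter.a => Letter.c
  | Letter.b => Letter.b
  | Letter.c => Letter.a

/-- The linear map induced by applying the substitution `a ↦ c, b ↦ b, c ↦ a` to
each letter of each word (the substitution is an involutive bijection on words,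
so on coefficients `⟨φP, w⟩ = ⟨P, flip w⟩`). -/
def phiSub (P : Series) : Series := fun w => P (w.map flipLetter)

/-- The composition σφ. -/
def sigmaPhi (P : Series) : Series := sigmaRev (phiSub P)

/-! Auxiliary lemmas -/

/-- The word involution underlying `sigmaPhi`. -/
def gw (w : Word) : Word := w.reverse.map flipLetter

lemma sigmaPhi_apply (P : Series) (w : Word) : sigmaPhi P w = P (gw w) := rfl

lemma flipLetter_flipLetter (x : Letter) : flipLetter (flipLetter x) = x := by
  cases x <;> rfl

lemma gw_gw (w : Word) : gw (gw w) = w := by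
  simp [gw, Function.comp_def, flipLetter_flipLetter]

lemma length_gw (w : Word) : (gw w).length = w.length := by simp [gw]

lemma gw_eq_iff {v w : Word} : gw w = v ↔ w = gw v := by
  constructor
  · rintro rfl; rw [gw_gw]
  · rintro rfl; rw [gw_gw]

lemma sigmaPhi_ofWord (v : Word) : sigmaPhi (ofWord v) = ofWord (gw v) := by
  funext w
  simp only [sigmaPhi_apply, ofWord]
  simp [gw_eq_iff]

lemma sigmaPhi_sub (P Q : Series) : sigmaPhi (P - Q) = sigmaPhi P - sigmaPhi Q := rfl

lemma sigmaPhi_smul (r : ℝ) (P : Series) : sigmaPhi (r • P) = r • sigmaPhi P := rfl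

lemma gw_take (w : Word) (i : ℕ) : (gw w).take i = gw (w.drop (w.length - i)) := by
  simp [gw, ← List.map_take, List.take_reverse]

lemma gw_drop (w : Word) (i : ℕ) : (gw w).drop i = gw (w.take (w.length - i)) := by
  simp [gw, ← List.map_drop, List.drop_reverse]

lemma sigmaPhi_cmul (P Q : Series) :
    sigmaPhi (cmul P Q) = cmul (sigmaPhi Q) (sigmaPhi P) := by
  funext w
  rw [sigmaPhi_apply]
  show cmul P Q (gw w) = _
  unfold cmul
  rw [length_gw]
  have key : ∀ i ∈ Finset.range (w.length + 1),
      P ((gw w).take i) * Q ((gw w).drop i)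
        = sigmaPhi Q (w.take (w.length - i)) * sigmaPhi P (w.drop (w.length - i)) := by
    intro i hi
    rw [gw_take, gw_drop, sigmaPhi_apply, sigmaPhi_apply, mul_comm]
  rw [Finset.sum_congr rfl key, ← Finset.sum_range_reflect
    (fun i => sigmaPhi Q (w.take i) * sigmaPhi P (w.drop i)) (w.length + 1)]
  simp

lemma zip_reverse' {α β : Type*} (l₁ : List α) (l₂ : List β) (h : l₁.length = l₂.length) :
    l₁.reverse.zip l₂.reverse = (l₁.zip l₂).reverse := by
  induction l₁ generalizing l₂ with
  | nil =>
    have : l₂ = [] := List.eq_nil_of_length_eq_zero h.symm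
    simp [this]
  | cons a t ih =>
    cases l₂ with
    | nil => simp at h
    | cons b t₂ =>
      simp only [List.length_cons, Nat.add_right_cancel_iff] at h
      rw [List.reverse_cons, List.reverse_cons,
        List.zip_append (by simp [h]), ih t₂ h]
      simp

lemma select_map (w : Word) (m : List Bool) (f : Letter → Letter) :
    select (w.map f) m = (select w m).map f := by
  simp [select, List.zip_map_left, List.filter_map, List.map_map, Function.comp_def]

lemma select_reverse (w : Word) (m : List Bool) (h : m.length = w.length) :
    select w.reverse m = (select w m.reverse).reverse := by
  have : w.reverse.zip m = (w.zip m.reverse).reverse := by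
    conv_lhs => rw [← m.reverse_reverse]
    exact zip_reverse' w m.reverse (by simp [h])
  simp [select, this]

lemma select_gw (w : Word) (m : List Bool) (h : m.length = w.length) :
    select (gw w) m = gw (select w m.reverse) := by
  rw [gw, select_map, select_reverse _ _ (by simp [h]), gw, List.map_reverse]

lemma ofFn_reverse {α : Type*} {n : ℕ} (m : Fin n → α) :
    (List.ofFn m).reverse = List.ofFn (fun i => m i.rev) := by
  apply List.ext_getElem
  · simp
  · intro i h1 h2
    simp only [List.getElem_reverse, List.getElem_ofFn]
    congr 1
    ext
    simp only [List.length_ofFn] at h1 h2 ⊢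
    simp [Fin.val_rev]
    omega

lemma shuffle_apply' (P Q : Series) (u : Word) {n : ℕ} (h : u.length = n) :
    shuffle P Q u = ∑ m : Fin n → Bool,
      P (select u (List.ofFn m)) * Q (select u (List.ofFn (fun i => ! m i))) := by
  subst h; rfl

lemma sigmaPhi_shuffle (P Q : Series) :
    sigmaPhi (shuffle P Q) = shuffle (sigmaPhi P) (sigmaPhi Q) := by
  funext w
  rw [sigmaPhi_apply]
  show shuffle P Q (gw w) = _
  rw [shuffle_apply' P Q (gw w) (length_gw w)]
  have key : ∀ m : Fin w.length → Bool,
      P (select (gw w) (List.ofFn m)) * Q (select (gw w) (List.ofFn (fun i => ! m i)))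
        = sigmaPhi P (select w (List.ofFn (fun i => m i.rev)))
          * sigmaPhi Q (select w (List.ofFn (fun i => ! m i.rev))) := by
    intro m
    rw [select_gw _ _ (by simp [length_gw]), select_gw _ _ (by simp [length_gw]),
      ofFn_reverse, ofFn_reverse, sigmaPhi_apply, sigmaPhi_apply]
  rw [Finset.sum_congr rfl (fun m _ => key m)]
  exact Fintype.sum_bijective (fun (m : Fin w.length → Bool) => fun i => m i.rev)
    (Function.Involutive.bijective (fun m => by funext i; simp [Fin.rev_rev]))
    _ _ (fun m => rfl)

lemma sigmaPhi_shufPow (P : Series) (k : ℕ) :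
    sigmaPhi (shufPow P k) = shufPow (sigmaPhi P) k := by
  induction k with
  | zero =>
    show sigmaPhi (ofWord []) = ofWord []
    rw [sigmaPhi_ofWord]; rfl
  | succ k ih =>
    show sigmaPhi (shuffle (shufPow P k) P) = shuffle (shufPow (sigmaPhi P) k) (sigmaPhi P)
    rw [sigmaPhi_shuffle, ih]

lemma sigmaPhi_shufExp (P : Series) :
    sigmaPhi (shufExp P) = shufExp (sigmaPhi P) := by
  funext w
  rw [sigmaPhi_apply]
  show shufExp P (gw w) = _
  unfold shufExp
  refine tsum_congr fun k => ?_
  have : shufPow P k (gw w) = shufPow (sigmaPhi P) k w := by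
    rw [← sigmaPhi_shufPow]; rfl
  rw [this]

lemma cmul_letter_left (x : Letter) (Y : Series) (w : Word) :
    cmul (ofWord [x]) Y w = if w.take 1 = [x] then Y (w.drop 1) else 0 := by
  unfold cmul ofWord
  rcases w with _ | ⟨y, t⟩
  · simp
  · rw [Finset.sum_eq_single 1]
    · split <;> simp_all
    · intro i hi hne
      simp only [Finset.mem_range] at hi
      have hle : i ≤ (y :: t).length := Nat.lt_succ_iff.mp hi
      have : ¬ ((y :: t).take i = [x]) := by
        intro hEq
        have h2 := congrArg List.length hEq
        rw [List.length_take, Nat.min_eq_left hle] at h2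
        exact hne h2
      simp [this]
    · intro h
      exact absurd (Finset.mem_range.mpr (by simp)) h

lemma cmul_letter_right (x : Letter) (Y : Series) (w : Word) :
    cmul Y (ofWord [x]) w =
      if w.drop (w.length - 1) = [x] then Y (w.take (w.length - 1)) else 0 := by
  unfold cmul ofWord
  rcases w with _ | ⟨y, t⟩
  · simp
  · set w := y :: t with hw
    have hn : 1 ≤ w.length := by simp [hw]
    rw [Finset.sum_eq_single (w.length - 1)]
    · split <;> simp_all
    · intro i hi hne
      simp only [Finset.mem_range] at hi
      have : ¬ (w.drop i = [x]) := by
        intro hEq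
        have h2 := congrArg List.length hEq
        rw [List.length_drop] at h2
        simp only [List.length_cons, List.length_nil] at h2
        apply hne
        omega
      simp [this]
    · intro h
      exact absurd (Finset.mem_range.mpr (by omega)) h

lemma length_select_le (w : Word) (m : List Bool) : (select w m).length ≤ w.length := by
  unfold select
  rw [List.length_map]
  calc ((w.zip m).filter (fun p => p.2)).length ≤ (w.zip m).length :=
        List.length_filter_le _ _
    _ ≤ w.length := by rw [List.length_zip]; omega

lemma shufPow_congr (P Q : Series) (k : ℕ) (u : Word)
    (h : ∀ v : Word, v.length ≤ u.length → P v = Q v) :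
    shufPow P k u = shufPow Q k u := by
  induction k generalizing u with
  | zero => rfl
  | succ k ih =>
    show shuffle (shufPow P k) P u = shuffle (shufPow Q k) Q u
    unfold shuffle
    refine Finset.sum_congr rfl fun m _ => ?_
    rw [ih _ (fun v hv => h v (hv.trans (length_select_le _ _))),
      h _ (length_select_le _ _)]

lemma shufExp_congr (P Q : Series) (u : Word)
    (h : ∀ v : Word, v.length ≤ u.length → P v = Q v) :
    shufExp P u = shufExp Q u := by
  unfold shufExp
  exact tsum_congr fun k => by rw [shufPow_congr P Q k u h]

lemma cmul_assoc (P Q R : Series) : cmul (cmul P Q) R = cmul P (cmul Q R) := by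
  funext w
  set n := w.length with hn
  have LHS : cmul (cmul P Q) R w = ∑ i ∈ Finset.range (n + 1), ∑ j ∈ Finset.range (i + 1),
      P (w.take j) * (Q ((w.drop j).take (i - j)) * R (w.drop i)) := by
    unfold cmul
    refine Finset.sum_congr rfl fun i hi => ?_
    simp only [Finset.mem_range] at hi
    have hi' : i ≤ n := Nat.lt_succ_iff.mp hi
    have hlen : (w.take i).length = i := by
      rw [List.length_take]; omega
    rw [hlen, Finset.sum_mul]
    refine Finset.sum_congr rfl fun j hj => ?_
    simp only [Finset.mem_range] at hj
    have hj' : j ≤ i := Nat.lt_succ_iff.mp hj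
    rw [List.take_take, Nat.min_eq_left hj', List.drop_take, mul_assoc]
  have RHS : cmul P (cmul Q R) w = ∑ j ∈ Finset.range (n + 1), ∑ i ∈ Finset.Ico j (n + 1),
      P (w.take j) * (Q ((w.drop j).take (i - j)) * R (w.drop i)) := by
    unfold cmul
    refine Finset.sum_congr rfl fun j hj => ?_
    simp only [Finset.mem_range] at hj
    have hj' : j ≤ n := Nat.lt_succ_iff.mp hj
    have hlen : (w.drop j).length = n - j := by
      rw [List.length_drop]
    rw [hlen, Finset.mul_sum, Finset.sum_Ico_eq_sum_range]
    have hrange : n + 1 - j = n - j + 1 := by omega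
    rw [hrange]
    refine Finset.sum_congr rfl fun t ht => ?_
    rw [List.drop_drop, Nat.add_sub_cancel_left]
  rw [LHS, RHS]
  have := Finset.sum_Ico_Ico_comm 0 (n + 1)
    (fun j i => P (w.take j) * (Q ((w.drop j).take (i - j)) * R (w.drop i)))
  simp only [Nat.Ico_zero_eq_range] at this
  rw [this]

lemma smul_apply' (r : ℝ) (P : Series) (v : Word) : (r • P) v = r * P v := rfl

lemma unique_fixed (S T : Series) (h0S : S [] = 0) (h0T : T [] = 0)
    (hS : S = ofWord [Letter.b] -
        cmul (ofWord [Letter.a]) (cmul (shufExp ((2 : ℝ) • S)) (ofWord [Letter.c])))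
    (hT : T = ofWord [Letter.b] -
        cmul (ofWord [Letter.a]) (cmul (shufExp ((2 : ℝ) • T)) (ofWord [Letter.c]))) :
    S = T := by
  have key : ∀ n : ℕ, ∀ w : Word, w.length ≤ n → S w = T w := by
    intro n
    induction n with
    | zero =>
      intro w hw
      have : w = [] := List.length_eq_zero_iff.mp (Nat.le_zero.mp hw)
      rw [this, h0S, h0T]
    | succ n ih =>
      intro w hw
      conv_lhs => rw [hS]
      conv_rhs => rw [hT]
      simp only [Pi.sub_apply]
      congr 1
      rw [cmul_letter_left, cmul_letter_left]
      by_cases h1 : w.take 1 = [Letter.a]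
      · simp only [h1, if_true]
        set t := w.drop 1 with ht
        rw [cmul_letter_right, cmul_letter_right]
        by_cases h2 : t.drop (t.length - 1) = [Letter.c]
        · simp only [h2, if_true]
          apply shufExp_congr
          intro v hv
          rw [smul_apply', smul_apply', ih v]
          have h3 : (t.take (t.length - 1)).length ≤ t.length := by
            rw [List.length_take]; omega
          have h4 : t.length ≤ w.length - 1 := by
            rw [ht, List.length_drop]
          omega
        · simp [h2]
      · simp [h1]
  funext w
  exact key w.length w le_rfl

lemma gw_a : gw [Letter.a] = [Letter.c] := rfl
lemma gw_b : gw [Letter.b] = [Letter.b] := rfl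
lemma gw_c : gw [Letter.c] = [Letter.a] := rfl

/-- If `S` is the (unique) series with zero constant term satisfying
`S = b − a·exp⧢(2S)·c`, and `S_a = a·exp⧢(2S)`, `S_b = S`, `S_c = exp⧢(2S)·c`,
then `σφ(S_b) = S_b`, `σφ(S_a) = S_c` and `σφ(S_c) = S_a`. -/
theorem sigmaPhi_symmetry (S : Series) (h0 : S [] = 0)
    (hS : S = ofWord [Letter.b] -
        cmul (ofWord [Letter.a]) (cmul (shufExp ((2 : ℝ) • S)) (ofWord [Letter.c]))) :
    sigmaPhi S = S ∧
    sigmaPhi (cmul (ofWord [Letter.a]) (shufExp ((2 : ℝ) • S))) =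
      cmul (shufExp ((2 : ℝ) • S)) (ofWord [Letter.c]) ∧
    sigmaPhi (cmul (shufExp ((2 : ℝ) • S)) (ofWord [Letter.c])) =
      cmul (ofWord [Letter.a]) (shufExp ((2 : ℝ) • S)) := by
  set T := sigmaPhi S with hT
  have h0T : T [] = 0 := by rw [hT, sigmaPhi_apply]; exact h0
  have hEq : T = ofWord [Letter.b] -
      cmul (ofWord [Letter.a]) (cmul (shufExp ((2 : ℝ) • T)) (ofWord [Letter.c])) := by
    conv_lhs => rw [hT, hS]
    rw [sigmaPhi_sub, sigmaPhi_cmul, sigmaPhi_cmul, sigmaPhi_shufExp, sigmaPhi_smul,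
      sigmaPhi_ofWord, sigmaPhi_ofWord, sigmaPhi_ofWord, gw_a, gw_b, gw_c, ← cmul_assoc,
      ← hT]
  have hST : S = T := unique_fixed S T h0 h0T hS hEq
  have part1 : sigmaPhi S = S := by rw [← hT, ← hST]
  refine ⟨part1, ?_, ?_⟩
  · rw [sigmaPhi_cmul, sigmaPhi_shufExp, sigmaPhi_smul, sigmaPhi_ofWord, gw_a, part1]
  · rw [sigmaPhi_cmul, sigmaPhi_shufExp, sigmaPhi_smul, sigmaPhi_ofWord, gw_c, part1]
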